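/- Adjacent lock operations on a common lock by distinct threads must synchronize: let e be an execution prefix of a program P and suppose steps i and i+1 of e are both lock operations (each being lk l or ul l) on the same lock l with th(e,i) ≠ th(e,i+1). Then step i is an ul l step and step i+1 is a lk l step, i.e., (i, i+1) ∈ sw. -/

import Mathlib

namespace DRF

/-! Common model: shared-memory concurrency with locks (SC-for-DRF). -/

/-- An action: read or write a memory location, or acquire/release a lock. -/
inductive Action (M L : Type) : Type where
  | rd : M → Action M L
  | wr : M → Action M L
  | lk : L → Action M L
  | ul : L → Action M L
deriving DecidableEq

/-- A thread: a deterministic labelled transition system with program counters `H`,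
initial counter `h0`, and a partial step function; `rd/lk/ul` leave the state unchanged,
a `wr x` step may change the state only at `x`. -/
structure Thread (M L : Type) where
  H : Type
  h0 : H
  step : H → (M → ℤ) → Option (Action M L × H × (M → ℤ))
  wf : ∀ h s a h' s', step h s = some (a, h', s') →
      ((∀ x, a ≠ Action.wr x) → s' = s) ∧
      (∀ x, a = Action.wr x → ∀ y, y ≠ x → s' y = s y)

/-- A program: a finite family of threads. -/
structure Program (M L : Type) where
  n : ℕ
  threads : Fin n → Thread M L

/-- A configuration: one program counter per thread, a state, and a lock map. -/
structure Config {M L : Type} (P : Program M L) where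
  pcs : ∀ i : Fin P.n, (P.threads i).H
  st : M → ℤ
  lks : L → Option (Fin P.n)

/-- The interleaving transition relation: thread `i` performs its next step with action `a`. -/
def ProgStep {M L : Type} [DecidableEq M] [DecidableEq L] (P : Program M L)
    (c : Config P) (i : Fin P.n) (a : Action M L) (c' : Config P) : Prop :=
  ∃ (h' : (P.threads i).H) (s' : M → ℤ),
    (P.threads i).step (c.pcs i) c.st = some (a, h', s') ∧
    c'.pcs = Function.update c.pcs i h' ∧
    c'.st = s' ∧
    (match a with
     | Action.rd _ => c'.lks = c.lks
     | Action.wr _ => c'.lks = c.lks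
     | Action.lk l => c.lks l = none ∧ c'.lks = Function.update c.lks l (some i)
     | Action.ul l => c.lks l = some i ∧ c'.lks = Function.update c.lks l none)

/-- An execution prefix of `P` from state `s0` with `n` transition steps. -/
structure ExecPrefix {M L : Type} [DecidableEq M] [DecidableEq L] (P : Program M L)
    (s0 : M → ℤ) (n : ℕ) where
  cfg : Fin (n + 1) → Config P
  thr : Fin n → Fin P.n
  act : Fin n → Action M L
  init_pcs : ∀ i, (cfg 0).pcs i = (P.threads i).h0
  init_st : (cfg 0).st = s0
  init_lks : ∀ l, (cfg 0).lks l = none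
  steps : ∀ k : Fin n, ProgStep P (cfg k.castSucc) (thr k) (act k) (cfg k.succ)

variable {M L : Type} [DecidableEq M] [DecidableEq L]

/-- Action `a` is a memory access of location `x`. -/
def isAccess (a : Action M L) (x : M) : Prop := a = Action.rd x ∨ a = Action.wr x

/-- Steps `i` and `j` conflict: both access the same location and at least one writes it. -/
def Conflict {P : Program M L} {s0 : M → ℤ} {n : ℕ} (e : ExecPrefix P s0 n)
    (i j : Fin n) : Prop :=
  ∃ x : M, isAccess (e.act i) x ∧ isAccess (e.act j) x ∧
    (e.act i = Action.wr x ∨ e.act j = Action.wr x)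

/-- Sequenced-before. -/
def sb {P : Program M L} {s0 : M → ℤ} {n : ℕ} (e : ExecPrefix P s0 n) (i j : Fin n) : Prop :=
  i < j ∧ e.thr i = e.thr j

/-- Synchronizes-with. -/
def sw {P : Program M L} {s0 : M → ℤ} {n : ℕ} (e : ExecPrefix P s0 n) (i j : Fin n) : Prop :=
  i < j ∧ ∃ l : L, e.act i = Action.ul l ∧ e.act j = Action.lk l

/-- Happens-before: the transitive closure of `sb ∪ sw`. -/
def hb {P : Program M L} {s0 : M → ℤ} {n : ℕ} (e : ExecPrefix P s0 n) (i j : Fin n) : Prop :=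
  Relation.TransGen (fun p q => sb e p q ∨ sw e p q) i j

/-- `e` contains an hb data race. -/
def hbrace {P : Program M L} {s0 : M → ℤ} {n : ℕ} (e : ExecPrefix P s0 n) : Prop :=
  ∃ i j : Fin n, i < j ∧ e.thr i ≠ e.thr j ∧ Conflict e i j ∧ ¬ hb e i j

/-- `e` contains an adjacent-access data race. -/
def aarace {P : Program M L} {s0 : M → ℤ} {n : ℕ} (e : ExecPrefix P s0 n) : Prop :=
  ∃ i j : Fin n, (j : ℕ) = (i : ℕ) + 1 ∧ e.thr i ≠ e.thr j ∧ Conflict e i j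

/-- Some execution of `P` contains an adjacent-access data race. -/
def race (P : Program M L) : Prop :=
  ∃ (s0 : M → ℤ) (n : ℕ) (e : ExecPrefix P s0 n), aarace e

def racefree (P : Program M L) : Prop := ¬ race P

/-- All threads have terminated in configuration `c`. -/
def terminatedAll (P : Program M L) (c : Config P) : Prop :=
  ∀ i : Fin P.n, (P.threads i).step (c.pcs i) c.st = none

/-- Program semantics: the set of initial/final state pairs of finite complete executions. -/
def Msem (P : Program M L) : Set ((M → ℤ) × (M → ℤ)) :=
  { p | ∃ (n : ℕ) (e : ExecPrefix P p.1 n),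
      terminatedAll P (e.cfg (Fin.last n)) ∧ (e.cfg (Fin.last n)).st = p.2 }

/-- `T ∥ C`: the program consisting of `T` together with the threads of `C`. -/
def par (T : Thread M L) (C : Program M L) : Program M L :=
  ⟨C.n + 1, Fin.cons T C.threads⟩

/-! Thread-alone executions. -/

/-- An execution fragment of thread `T` run alone, with `n` steps. -/
structure Frag (T : Thread M L) (n : ℕ) where
  pc : Fin (n + 1) → T.H
  st : Fin (n + 1) → (M → ℤ)
  act : Fin n → Action M L
  steps : ∀ k : Fin n, T.step (pc k.castSucc) (st k.castSucc) = some (act k, pc k.succ, st k.succ)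

/-- An infinite execution of thread `T` run alone. -/
structure InfRun (T : Thread M L) where
  pc : ℕ → T.H
  st : ℕ → (M → ℤ)
  act : ℕ → Action M L
  steps : ∀ k : ℕ, T.step (pc k) (st k) = some (act k, pc (k + 1), st (k + 1))

/-- Number of `lk l` steps among the first `k` steps of `f`. -/
def lkCnt {T : Thread M L} {n : ℕ} (f : Frag T n) (l : L) (k : ℕ) : ℕ :=
  (Finset.univ.filter (fun i : Fin n => (i : ℕ) < k ∧ f.act i = Action.lk l)).card

/-- Number of `ul l` steps among the first `k` steps of `f`. -/
def ulCnt {T : Thread M L} {n : ℕ} (f : Frag T n) (l : L) (k : ℕ) : ℕ :=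
  (Finset.univ.filter (fun i : Fin n => (i : ℕ) < k ∧ f.act i = Action.ul l)).card

/-- `T` is well-locked for lock `l`: run alone from its initial counter, its first step is
`lk l`; `lk l` and `ul l` steps strictly alternate starting with `lk l`; every infinite
execution contains infinitely many lock operations; and every terminated execution has as
many `ul l` steps as `lk l` steps (the last `lk l` is matched by an `ul l`). -/
def WellLocked (T : Thread M L) (l : L) : Prop :=
  (∀ s a h' s', T.step T.h0 s = some (a, h', s') → a = Action.lk l) ∧
  (∀ (n : ℕ) (f : Frag T n), f.pc 0 = T.h0 →
     ∀ k : Fin n,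
       (f.act k = Action.lk l → lkCnt f l k = ulCnt f l k) ∧
       (f.act k = Action.ul l → lkCnt f l k = ulCnt f l k + 1)) ∧
  (∀ r : InfRun T, r.pc 0 = T.h0 →
     ∀ m : ℕ, ∃ k : ℕ, m ≤ k ∧ ((∃ l' : L, r.act k = Action.lk l') ∨ (∃ l' : L, r.act k = Action.ul l'))) ∧
  (∀ (n : ℕ) (f : Frag T n), f.pc 0 = T.h0 →
     T.step (f.pc (Fin.last n)) (f.st (Fin.last n)) = none →
     lkCnt f l n = ulCnt f l n)

/-- Action `a` is a memory access (read or write). -/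
def isMem : Action M L → Prop
  | Action.rd _ => True
  | Action.wr _ => True
  | _ => False

/-- `(T,h,s) →* (T,h',s')` with label `(l,(Ra,Wa),(Rb,Wb))`: `T` run alone goes from `(h,s)`
to `(h',s')` by one `lk l` step, then memory steps, one `ul l` step, then memory steps,
ending exactly when `T`'s next action is a lock acquire or `T` has terminated; `Ra`/`Wa` are
the locations read/written strictly between the `lk` and the `ul`, and `Rb`/`Wb` those
read/written after the `ul`. -/
def StarStep (T : Thread M L) (h : T.H) (s : M → ℤ) (l : L)
    (Ra Wa Rb Wb : Set M) (h' : T.H) (s' : M → ℤ) : Prop :=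
  ∃ (n : ℕ) (f : Frag T n) (hn : 0 < n) (k : Fin n),
    f.pc 0 = h ∧ f.st 0 = s ∧
    f.pc (Fin.last n) = h' ∧ f.st (Fin.last n) = s' ∧
    f.act ⟨0, hn⟩ = Action.lk l ∧
    f.act k = Action.ul l ∧
    (∀ i : Fin n, 0 < (i : ℕ) → (i : ℕ) < (k : ℕ) → isMem (f.act i)) ∧
    (∀ i : Fin n, (k : ℕ) < (i : ℕ) → isMem (f.act i)) ∧
    ((∃ (l'' : L) (h'' : T.H) (s'' : M → ℤ), T.step h' s' = some (Action.lk l'', h'', s'')) ∨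
      T.step h' s' = none) ∧
    Ra = {x : M | ∃ i : Fin n, 0 < (i : ℕ) ∧ (i : ℕ) < (k : ℕ) ∧ f.act i = Action.rd x} ∧
    Wa = {x : M | ∃ i : Fin n, 0 < (i : ℕ) ∧ (i : ℕ) < (k : ℕ) ∧ f.act i = Action.wr x} ∧
    Rb = {x : M | ∃ i : Fin n, (k : ℕ) < (i : ℕ) ∧ f.act i = Action.rd x} ∧
    Wb = {x : M | ∃ i : Fin n, (k : ℕ) < (i : ℕ) ∧ f.act i = Action.wr x}

/-- A state trace with `m` lock-to-lock transitions: trace item `2*j` (at a `lk`) is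
`(lkOf j, sE j, RE j, WE j)` and trace item `2*j+1` (from the `ul` to the next `lk`) is
`(RO j, WO j, sO j)`; components at indices `≥ m` are irrelevant junk. -/
structure STrace (M L : Type) where
  m : ℕ
  lkOf : ℕ → L
  sE : ℕ → (M → ℤ)
  sO : ℕ → (M → ℤ)
  RE : ℕ → Set M
  WE : ℕ → Set M
  RO : ℕ → Set M
  WO : ℕ → Set M

/-- Accessed locations at even item `2*j`. -/
def AE {M L : Type} (t : STrace M L) (j : ℕ) : Set M := t.RE j ∪ t.WE j

/-- Accessed locations at odd item `2*j+1`. -/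
def AO {M L : Type} (t : STrace M L) (j : ℕ) : Set M := t.RO j ∪ t.WO j

/-- The state trace set `𝕊(T)` of a thread `T`. -/
def STraces (T : Thread M L) : Set (STrace M L) :=
  { t | ∃ h : ℕ → T.H,
      h 0 = T.h0 ∧
      (∀ j < t.m, StarStep T (h j) (t.sE j) (t.lkOf j)
        (t.RE j) (t.WE j) (t.RO j) (t.WO j) (h (j + 1)) (t.sO j)) ∧
      (∀ j, 0 < j → j < t.m → ∀ x ∈ AO t (j - 1), t.sO (j - 1) x = t.sE j x) }

/-- The length-`2*m` prefixes of the state traces `t'` and `t` match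
(primed components from `t'`, unprimed from `t`). -/
def matchN {M L : Type} (t' t : STrace M L) (m : ℕ) : Prop :=
  (∀ j < m, t'.lkOf j = t.lkOf j) ∧
  (∀ j < m, t'.RE j ⊆ (if j = 0 then (∅ : Set M) else AO t (j - 1)) ∪ AE t j ∪ AO t j) ∧
  (∀ j < m, t'.WE j ⊆ (if j = 0 then (∅ : Set M) else t.WO (j - 1)) ∪ t.WE j ∪ t.WO j) ∧
  (∀ j < m, t'.RO j ⊆ AO t j) ∧
  (∀ j < m, t'.WO j ⊆ t.WO j) ∧
  (∀ j < m, ∀ x : M, (j = 0 ∨ x ∉ AO t (j - 1)) → t'.sE j x = t.sE j x) ∧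
  (∀ j, 0 < j → j < m → ∀ x ∈ AO t (j - 1) \ AO t' (j - 1), t'.sO (j - 1) x = t'.sE j x) ∧
  (∀ j < m, ∀ x ∉ t.WO j, t'.sO j x = t.sO j x)

/-- Two complete state traces match. -/
def matchTr {M L : Type} (t' t : STrace M L) : Prop :=
  t'.m = t.m ∧ matchN t' t t.m

/-- The state-based refinement check `check(T',T)`. -/
def check (T' T : Thread M L) : Prop :=
  ∀ t' ∈ STraces T', ∃ t ∈ STraces T,
    matchTr t' t ∨
    (∃ p : ℕ, 0 < p ∧ p < t'.m ∧ p ≤ t.m ∧ matchN t' t p ∧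
      ∃ x ∈ AO t (p - 1) \ AO t' (p - 1), t'.sO (p - 1) x ≠ t'.sE p x)

/-- Refinement `ref(T',T)`: for every context `C` (a finite family of threads well-locked
for `l`), if `T ∥ C` is race free then so is `T' ∥ C` and `𝕄(T' ∥ C) ⊆ 𝕄(T ∥ C)`. -/
def ref (T' T : Thread M L) (l : L) : Prop :=
  ∀ C : Program M L, (∀ i : Fin C.n, WellLocked (C.threads i) l) →
    racefree (par T C) →
    racefree (par T' C) ∧ Msem (par T' C) ⊆ Msem (par T C)

/-- In configuration `c`, the next action of thread `t` is a lock acquire. -/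
def nextIsLk (P : Program M L) (c : Config P) (t : Fin P.n) : Prop :=
  ∃ (l : L) (h' : (P.threads t).H) (s' : M → ℤ),
    (P.threads t).step (c.pcs t) c.st = some (Action.lk l, h', s')

/-- In configuration `c`, thread `t` has terminated. -/
def termAt (P : Program M L) (c : Config P) (t : Fin P.n) : Prop :=
  (P.threads t).step (c.pcs t) c.st = none

namespace ProgStep

variable {P : Program M L} {c c' : Config P} {t : Fin P.n} {l : L}

theorem lks_after_lk (h : ProgStep P c t (Action.lk l) c') : c'.lks l = some t := by
  obtain ⟨-, -, -, -, -, -, hlks⟩ := h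
  rw [hlks, Function.update_self]

theorem lks_after_ul (h : ProgStep P c t (Action.ul l) c') : c'.lks l = none := by
  obtain ⟨-, -, -, -, -, -, hlks⟩ := h
  rw [hlks, Function.update_self]

theorem lks_before_lk (h : ProgStep P c t (Action.lk l) c') : c.lks l = none := by
  obtain ⟨-, -, -, -, -, hfree, -⟩ := h
  exact hfree

theorem lks_before_ul (h : ProgStep P c t (Action.ul l) c') : c.lks l = some t := by
  obtain ⟨-, -, -, -, -, hown, -⟩ := h
  exact hown

/-- Two consecutive operations on lock `l` by different threads: the first cannot be `lk l`,
since the lock would still be held by its thread, and the second cannot be `ul l`, since the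
lock would be free or held by the other thread. -/
theorem ul_lk_of_consecutive {c'' : Config P} {t' : Fin P.n} {a a' : Action M L}
    (h : ProgStep P c t a c') (h' : ProgStep P c' t' a' c'') (hne : t ≠ t')
    (ha : a = Action.lk l ∨ a = Action.ul l) (ha' : a' = Action.lk l ∨ a' = Action.ul l) :
    a = Action.ul l ∧ a' = Action.lk l := by
  rcases ha with rfl | rfl <;> rcases ha' with rfl | rfl
  · exact absurd (h.lks_after_lk.symm.trans h'.lks_before_lk) (by simp)
  · exact absurd (Option.some.inj (h.lks_after_lk.symm.trans h'.lks_before_ul)) hne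
  · exact ⟨rfl, rfl⟩
  · exact absurd (h.lks_after_ul.symm.trans h'.lks_before_ul) (by simp)

end ProgStep

theorem ExecPrefix.steps_succ {P : Program M L} {s0 : M → ℤ} {n : ℕ} (e : ExecPrefix P s0 n)
    (i : Fin n) (hi : (i : ℕ) + 1 < n) :
    ProgStep P (e.cfg i.succ) (e.thr ⟨i + 1, hi⟩) (e.act ⟨i + 1, hi⟩)
      (e.cfg (Fin.succ ⟨i + 1, hi⟩)) :=
  e.steps ⟨i + 1, hi⟩

theorem adjacent_locks_sync_general {M L : Type} [DecidableEq M]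
    [DecidableEq L] (P : Program M L) (s0 : M → ℤ) (n : ℕ) (e : ExecPrefix P s0 n)
    (l : L) (i : Fin n) (hi : (i : ℕ) + 1 < n)
    (h1 : e.act i = Action.lk l ∨ e.act i = Action.ul l)
    (h2 : e.act ⟨(i : ℕ) + 1, hi⟩ = Action.lk l ∨ e.act ⟨(i : ℕ) + 1, hi⟩ = Action.ul l)
    (hthr : e.thr i ≠ e.thr ⟨(i : ℕ) + 1, hi⟩) :
    (e.act i = Action.ul l ∧ e.act ⟨(i : ℕ) + 1, hi⟩ = Action.lk l) ∧
    sw e i ⟨(i : ℕ) + 1, hi⟩ := by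
  have hact := ProgStep.ul_lk_of_consecutive (e.steps i) (e.steps_succ i hi) hthr h1 h2
  exact ⟨hact, Nat.lt_succ_self _, l, hact⟩

/-- Adjacent lock operations on a common lock by distinct threads must
synchronize: step `i` must be an `ul l` step and step `i+1` a `lk l` step, i.e.,
`(i, i+1) ∈ sw`. -/
theorem adjacent_locks_sync {M L : Type} [Fintype M] [DecidableEq M] [Fintype L]
    [DecidableEq L] (P : Program M L) (s0 : M → ℤ) (n : ℕ) (e : ExecPrefix P s0 n)
    (l : L) (i : Fin n) (hi : (i : ℕ) + 1 < n)
    (h1 : e.act i = Action.lk l ∨ e.act i = Action.ul l)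
    (h2 : e.act ⟨(i : ℕ) + 1, hi⟩ = Action.lk l ∨ e.act ⟨(i : ℕ) + 1, hi⟩ = Action.ul l)
    (hthr : e.thr i ≠ e.thr ⟨(i : ℕ) + 1, hi⟩) :
    (e.act i = Action.ul l ∧ e.act ⟨(i : ℕ) + 1, hi⟩ = Action.lk l) ∧
    sw e i ⟨(i : ℕ) + 1, hi⟩ :=
  adjacent_locks_sync_general P s0 n e l i hi h1 h2 hthr

end DRF
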